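/- arXiv:0806.2789 — 7 statements merged into one kernel-verified Lean document; each statement's English description precedes it below -/
import Mathlib

section
/- For any two lines l1: a1x+b1y+c1=0 and l2: a2x+b2y+c2=0 such that all three colored spreads are defined and nonzero, 1/s_b(l1,l2) + 1/s_r(l1,l2) + 1/s_g(l1,l2) = 2. -/
/-! Each reciprocal spread is the product of the corresponding quadratic form (blue `x² + y²`,
red `x² - y²`, green `2xy`) evaluated at the two normal vectors `(a1, b1)`, `(a2, b2)`, divided by
`± (a1 b2 - a2 b1)²`. The claim is therefore the polynomial identity
`(a1² + b1²)(a2² + b2²) - (a1² - b1²)(a2² - b2²) - 4 a1 b1 a2 b2 = 2 (a1 b2 - a2 b1)²`. -/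

theorem blue_sub_red_sub_green_eq_two_mul_sq {R : Type*} [CommRing R] (a1 b1 a2 b2 : R) :
    (a1 ^ 2 + b1 ^ 2) * (a2 ^ 2 + b2 ^ 2) - (a1 ^ 2 - b1 ^ 2) * (a2 ^ 2 - b2 ^ 2)
      - 4 * a1 * b1 * a2 * b2 = 2 * (a1 * b2 - a2 * b1) ^ 2 := by
  ring

theorem spread_reciprocal_sum_general {F : Type*} [Field F]
    (a1 b1 a2 b2 : F)
    (hcross : a1 * b2 - a2 * b1 ≠ 0) :
    1 / ((a1 * b2 - a2 * b1) ^ 2 / ((a1 ^ 2 + b1 ^ 2) * (a2 ^ 2 + b2 ^ 2)))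
      + 1 / (-((a1 * b2 - a2 * b1) ^ 2 / ((a1 ^ 2 - b1 ^ 2) * (a2 ^ 2 - b2 ^ 2))))
      + 1 / (-((a1 * b2 - a2 * b1) ^ 2 / (4 * a1 * b1 * a2 * b2)))
      = 2 := by
  simp only [one_div, inv_neg, inv_div, ← sub_eq_add_neg, ← sub_div]
  rw [blue_sub_red_sub_green_eq_two_mul_sq, mul_div_assoc, div_self (pow_ne_zero 2 hcross),
    mul_one]

/-- Sum of reciprocals of the blue, red and green spreads between two lines is 2. -/
theorem spread_reciprocal_sum {F : Type*} [Field F] (hchar : (2 : F) ≠ 0)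
    (a1 b1 c1 a2 b2 c2 : F)
    (hb : (a1 ^ 2 + b1 ^ 2) * (a2 ^ 2 + b2 ^ 2) ≠ 0)
    (hr : (a1 ^ 2 - b1 ^ 2) * (a2 ^ 2 - b2 ^ 2) ≠ 0)
    (hg : 4 * a1 * b1 * a2 * b2 ≠ 0)
    (hcross : a1 * b2 - a2 * b1 ≠ 0) :
    1 / ((a1 * b2 - a2 * b1) ^ 2 / ((a1 ^ 2 + b1 ^ 2) * (a2 ^ 2 + b2 ^ 2)))
      + 1 / (-((a1 * b2 - a2 * b1) ^ 2 / ((a1 ^ 2 - b1 ^ 2) * (a2 ^ 2 - b2 ^ 2))))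
      + 1 / (-((a1 * b2 - a2 * b1) ^ 2 / (4 * a1 * b1 * a2 * b2)))
      = 2 :=
  spread_reciprocal_sum_general a1 b1 a2 b2 hcross
end

section
/- Triple quad formula (blue): for points A1, A2, A3 in the plane over a field of characteristic not 2, the three points are collinear if and only if (Q1+Q2+Q3)² = 2(Q1²+Q2²+Q3²), where Q1 = Q_b(A2,A3), Q2 = Q_b(A1,A3), Q3 = Q_b(A1,A2). -/
/-- Blue quadrance between two points. -/
def Qb {F : Type*} [Field F] (X Y : F × F) : F :=
  (Y.1 - X.1) ^ 2 + (Y.2 - X.2) ^ 2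

/-- Three points are collinear when the vectors `A2 - A1` and `A3 - A1`
are linearly dependent. -/
def Collinear3 {F : Type*} [Field F] (A1 A2 A3 : F × F) : Prop :=
  ∃ s t : F, (s, t) ≠ (0, 0) ∧
    s • (A2.1 - A1.1, A2.2 - A1.2) + t • (A3.1 - A1.1, A3.2 - A1.2) = (0, 0)

/-! Writing `u = A2 - A1` and `v = A3 - A1`, the quadrances are `Q(u)`, `Q(v)` and `Q(v - u)`,
and the identity `(Q₁ + Q₂ + Q₃)² - 2(Q₁² + Q₂² + Q₃²) = 4 (u × v)²` reduces the triple quad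
formula to the vanishing of the cross product `u × v`, which is linear dependence of `u, v`;
the factor `4` is harmless in characteristic not `2`. -/

section

variable {F : Type*} [Field F]

def cross (u v : F × F) : F := u.1 * v.2 - u.2 * v.1

/-- Wildberger's Archimedes function; on the quadrances of a triangle it is `16` times the
squared area. -/
def archimedes (a b c : F) : F := (a + b + c) ^ 2 - 2 * (a ^ 2 + b ^ 2 + c ^ 2)

theorem exists_nontrivial_smul_add_smul_eq_zero_iff_cross_eq_zero (u v : F × F) :
    (∃ s t : F, (s, t) ≠ (0, 0) ∧ s • u + t • v = 0) ↔ cross u v = 0 := by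
  simp only [cross]
  constructor
  · rintro ⟨s, t, hst, h⟩
    have h1 : s * u.1 + t * v.1 = 0 := congrArg Prod.fst h
    have h2 : s * u.2 + t * v.2 = 0 := congrArg Prod.snd h
    have hs : s * (u.1 * v.2 - u.2 * v.1) = 0 := by linear_combination v.2 * h1 - v.1 * h2
    have ht : t * (u.1 * v.2 - u.2 * v.1) = 0 := by linear_combination u.1 * h2 - u.2 * h1
    by_cases hs0 : s = 0
    · have ht0 : t ≠ 0 := fun ht0 => hst (by rw [hs0, ht0])
      exact (mul_eq_zero.mp ht).resolve_left ht0
    · exact (mul_eq_zero.mp hs).resolve_left hs0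
  · intro h
    by_cases hu1 : u.1 = 0
    · by_cases hu2 : u.2 = 0
      · exact ⟨1, 0, by simp, Prod.ext (by simp [hu1]) (by simp [hu2])⟩
      · refine ⟨v.2, -u.2, by simp [hu2], Prod.ext ?_ ?_⟩
        · simp only [Prod.fst_add, Prod.smul_fst, smul_eq_mul, Prod.fst_zero]
          linear_combination h
        · simp only [Prod.snd_add, Prod.smul_snd, smul_eq_mul, Prod.snd_zero]
          ring
    · refine ⟨v.1, -u.1, by simp [hu1], Prod.ext ?_ ?_⟩
      · simp only [Prod.fst_add, Prod.smul_fst, smul_eq_mul, Prod.fst_zero]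
        ring
      · simp only [Prod.snd_add, Prod.smul_snd, smul_eq_mul, Prod.snd_zero]
        linear_combination -h

theorem archimedes_Qb (A1 A2 A3 : F × F) :
    archimedes (Qb A2 A3) (Qb A1 A3) (Qb A1 A2) = 4 * cross (A2 - A1) (A3 - A1) ^ 2 := by
  simp only [archimedes, Qb, cross, Prod.fst_sub, Prod.snd_sub]
  ring

end

/-- Triple quad formula (blue): three points are collinear iff their blue
quadrances satisfy `(Q1+Q2+Q3)² = 2(Q1²+Q2²+Q3²)`. -/
theorem blue_triple_quad {F : Type*} [Field F] (hchar : (2 : F) ≠ 0)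
    (A1 A2 A3 : F × F) :
    Collinear3 A1 A2 A3 ↔
      (Qb A2 A3 + Qb A1 A3 + Qb A1 A2) ^ 2
        = 2 * ((Qb A2 A3) ^ 2 + (Qb A1 A3) ^ 2 + (Qb A1 A2) ^ 2) := by
  have h4 : (4 : F) ≠ 0 := by simpa [show (4 : F) = 2 * 2 by norm_num] using hchar
  calc Collinear3 A1 A2 A3 ↔ cross (A2 - A1) (A3 - A1) = 0 :=
        exists_nontrivial_smul_add_smul_eq_zero_iff_cross_eq_zero _ _
    _ ↔ archimedes (Qb A2 A3) (Qb A1 A3) (Qb A1 A2) = 0 := by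
        simp [archimedes_Qb, h4]
    _ ↔ _ := sub_eq_zero
end

section
/- Triple quad formula (red): for points A1, A2, A3 in the plane over a field of characteristic not 2, if the three points are collinear then (Q1+Q2+Q3)² = 2(Q1²+Q2²+Q3²), where Qi are the red quadrances Q1 = Q_r(A2,A3), Q2 = Q_r(A1,A3), Q3 = Q_r(A1,A2). -/
/-- Red quadrance between two points. -/
def Qr {F : Type*} [Field F] (X Y : F × F) : F :=
  (Y.1 - X.1) ^ 2 - (Y.2 - X.2) ^ 2

/-! The red Archimedes function `(Q1+Q2+Q3)² - 2(Q1²+Q2²+Q3²)` of a triangle is `-4` times the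
square of the determinant of its edge vectors `A2 - A1`, `A3 - A1`; collinearity makes that
determinant vanish. -/

section

variable {F : Type*} [Field F]

def wedge (A1 A2 A3 : F × F) : F :=
  (A2.1 - A1.1) * (A3.2 - A1.2) - (A3.1 - A1.1) * (A2.2 - A1.2)

theorem sq_Qr_add_Qr_add_Qr (A1 A2 A3 : F × F) :
    (Qr A2 A3 + Qr A1 A3 + Qr A1 A2) ^ 2
      = 2 * ((Qr A2 A3) ^ 2 + (Qr A1 A3) ^ 2 + (Qr A1 A2) ^ 2) - 4 * wedge A1 A2 A3 ^ 2 := by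
  simp only [Qr, wedge]
  ring

theorem Collinear3.wedge_eq_zero {A1 A2 A3 : F × F} (h : Collinear3 A1 A2 A3) :
    wedge A1 A2 A3 = 0 := by
  obtain ⟨s, t, hst, heq⟩ := h
  have h1 : s * (A2.1 - A1.1) + t * (A3.1 - A1.1) = 0 := congrArg Prod.fst heq
  have h2 : s * (A2.2 - A1.2) + t * (A3.2 - A1.2) = 0 := congrArg Prod.snd heq
  have hs : s * wedge A1 A2 A3 = 0 := by
    unfold wedge; linear_combination (A3.2 - A1.2) * h1 - (A3.1 - A1.1) * h2
  have ht : t * wedge A1 A2 A3 = 0 := by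
    unfold wedge; linear_combination (A2.1 - A1.1) * h2 - (A2.2 - A1.2) * h1
  by_cases s0 : s = 0
  · have t0 : t ≠ 0 := fun t0 => hst (by rw [s0, t0])
    exact (mul_eq_zero.mp ht).resolve_left t0
  · exact (mul_eq_zero.mp hs).resolve_left s0

end

theorem red_triple_quad_general {F : Type*} [Field F]
    (A1 A2 A3 : F × F) (h : Collinear3 A1 A2 A3) :
    (Qr A2 A3 + Qr A1 A3 + Qr A1 A2) ^ 2
      = 2 * ((Qr A2 A3) ^ 2 + (Qr A1 A3) ^ 2 + (Qr A1 A2) ^ 2) := by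
  rw [sq_Qr_add_Qr_add_Qr, h.wedge_eq_zero]
  ring

/-- Triple quad formula (red): collinearity implies
`(Q1+Q2+Q3)² = 2(Q1²+Q2²+Q3²)` for red quadrances. -/
theorem red_triple_quad {F : Type*} [Field F] (hchar : (2 : F) ≠ 0)
    (A1 A2 A3 : F × F) (h : Collinear3 A1 A2 A3) :
    (Qr A2 A3 + Qr A1 A3 + Qr A1 A2) ^ 2
      = 2 * ((Qr A2 A3) ^ 2 + (Qr A1 A3) ^ 2 + (Qr A1 A2) ^ 2) :=
  red_triple_quad_general A1 A2 A3 h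
end

section
/- Archimedes' theorem (red): for any triangle A1A2A3 in the plane over a field, with red quadrances Q1, Q2, Q3, one has (Q1+Q2+Q3)² − 2(Q1²+Q2²+Q3²) = −4D², where D = (x2−x1)(y3−y1) − (x3−x1)(y2−y1). -/
/-- Archimedes' theorem (red): the Archimedes function of the red
quadrances of a triangle equals `-4D²` where `D` is twice the signed area. -/
theorem red_archimedes {F : Type*} [Field F] (A1 A2 A3 : F × F) :
    (Qr A2 A3 + Qr A1 A3 + Qr A1 A2) ^ 2
        - 2 * ((Qr A2 A3) ^ 2 + (Qr A1 A3) ^ 2 + (Qr A1 A2) ^ 2)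
      = -(4 * ((A2.1 - A1.1) * (A3.2 - A1.2) - (A3.1 - A1.1) * (A2.2 - A1.2)) ^ 2) := by
  unfold Qr
  ring
end

section
/- Quotient right-triangle spread formula (blue): if A1A2A3 is a triangle with A1A3 blue-perpendicular to A2A3 (i.e., (A3−A1)·_b(A3−A2)=0) and all quadrances are nonzero, then the blue spread at vertex A1, between the lines A1A2 and A1A3, equals Q_b(A2,A3)/Q_b(A1,A2). -/
/-- Blue dot product of two vectors. -/
def blueDot {F : Type*} [Field F] (u v : F × F) : F :=
  u.1 * v.1 + u.2 * v.2

/-- Blue spread between lines with direction vectors `u` and `v`. -/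
def blueSpread {F : Type*} [Field F] (u v : F × F) : F :=
  (u.1 * v.2 - u.2 * v.1) ^ 2 / ((u.1 ^ 2 + u.2 ^ 2) * (v.1 ^ 2 + v.2 ^ 2))

namespace BlueGeometry

variable {F : Type*} [Field F]

lemma blueDot_comm (u v : F × F) : blueDot u v = blueDot v u := by
  simp only [blueDot]; ring

lemma blueDot_sub_right (u v w : F × F) : blueDot u (v - w) = blueDot u v - blueDot u w := by
  simp only [blueDot, Prod.fst_sub, Prod.snd_sub]; ring

lemma Qb_eq_blueDot_sub (X Y : F × F) : Qb X Y = blueDot (Y - X) (Y - X) := by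
  simp only [Qb, blueDot, Prod.fst_sub, Prod.snd_sub, sq]

lemma blueSpread_eq_div_blueDot (u v : F × F) :
    blueSpread u v = (u.1 * v.2 - u.2 * v.1) ^ 2 / (blueDot u u * blueDot v v) := by
  simp only [blueSpread, blueDot, sq]

lemma sq_cross_add_sq_blueDot (u v : F × F) :
    (u.1 * v.2 - u.2 * v.1) ^ 2 + blueDot u v ^ 2 = blueDot u u * blueDot v v := by
  simp only [blueDot]; ring

lemma blueDot_sub_sub_of_blueDot_eq_zero {v w : F × F} (h : blueDot v w = 0) :
    blueDot (v - w) (v - w) = blueDot v v + blueDot w w := by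
  simp only [blueDot, Prod.fst_sub, Prod.snd_sub] at h ⊢
  linear_combination (-2) * h

lemma blueSpread_eq_div_of_blueDot_sub_eq_zero {u v : F × F}
    (hperp : blueDot v (v - u) = 0) (hv : blueDot v v ≠ 0) :
    blueSpread u v = blueDot (v - u) (v - u) / blueDot u u := by
  set w := v - u
  have hu : u = v - w := (sub_sub_cancel v u).symm
  have huv : blueDot u v = blueDot v v := by
    rw [blueDot_comm, hu, blueDot_sub_right, hperp, sub_zero]
  have hpyth : blueDot u u = blueDot v v + blueDot w w := by
    rw [hu]; exact blueDot_sub_sub_of_blueDot_eq_zero hperp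
  have hcross : (u.1 * v.2 - u.2 * v.1) ^ 2 = blueDot v v * blueDot w w := by
    linear_combination
      sq_cross_add_sq_blueDot u v + blueDot v v * hpyth - (blueDot u v + blueDot v v) * huv
  rw [blueSpread_eq_div_blueDot, hcross, mul_comm (blueDot u u), mul_div_mul_left _ _ hv]

end BlueGeometry

open BlueGeometry in
theorem blue_right_triangle_spread_general {F : Type*} [Field F] (A1 A2 A3 : F × F)
    (hperp : blueDot (A3.1 - A1.1, A3.2 - A1.2) (A3.1 - A2.1, A3.2 - A2.2) = 0)
    (hQ2 : Qb A1 A3 ≠ 0) :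
    blueSpread (A2.1 - A1.1, A2.2 - A1.2) (A3.1 - A1.1, A3.2 - A1.2)
      = Qb A2 A3 / Qb A1 A2 := by
  have hw : (A3 - A1) - (A2 - A1) = A3 - A2 := sub_sub_sub_cancel_right A3 A2 A1
  rw [Qb_eq_blueDot_sub A2 A3, Qb_eq_blueDot_sub A1 A2, ← hw]
  refine blueSpread_eq_div_of_blueDot_sub_eq_zero (u := A2 - A1) (v := A3 - A1) ?_ ?_
  · rwa [hw]
  · rwa [← Qb_eq_blueDot_sub]

/-- In a blue right triangle (right vertex at `A3`), the spread at `A1` is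
the quotient of the opposite quadrance by the hypotenuse quadrance. -/
theorem blue_right_triangle_spread {F : Type*} [Field F] (A1 A2 A3 : F × F)
    (hperp : blueDot (A3.1 - A1.1, A3.2 - A1.2) (A3.1 - A2.1, A3.2 - A2.2) = 0)
    (hQ1 : Qb A2 A3 ≠ 0) (hQ2 : Qb A1 A3 ≠ 0) (hQ3 : Qb A1 A2 ≠ 0) :
    blueSpread (A2.1 - A1.1, A2.2 - A1.2) (A3.1 - A1.1, A3.2 - A1.2)
      = Qb A2 A3 / Qb A1 A2 :=
  blue_right_triangle_spread_general A1 A2 A3 hperp hQ2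
end

section
/- Spread law (blue): for a triangle A1A2A3 with nonzero blue quadrances Q1, Q2, Q3 (Qi opposite Ai) and blue spreads s1, s2, s3 at the vertices, s1/Q1 = s2/Q2 = s3/Q3. -/
section BlueSpreadLaw

variable {F : Type*} [Field F]

theorem Qb_comm (X Y : F × F) : Qb X Y = Qb Y X := by
  unfold Qb; ring

def twiceSignedArea (A B C : F × F) : F :=
  (B.1 - A.1) * (C.2 - A.2) - (B.2 - A.2) * (C.1 - A.1)

theorem twiceSignedArea_rotate (A B C : F × F) :
    twiceSignedArea B C A = twiceSignedArea A B C := by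
  unfold twiceSignedArea; ring

theorem twiceSignedArea_swap (A B C : F × F) :
    twiceSignedArea B A C = -twiceSignedArea A B C := by
  unfold twiceSignedArea; ring

theorem blueSpread_div_Qb (A B C : F × F) :
    blueSpread (B.1 - A.1, B.2 - A.2) (C.1 - A.1, C.2 - A.2) / Qb B C
      = twiceSignedArea A B C ^ 2 / (Qb A B * Qb A C * Qb B C) := by
  rw [blueSpread, div_div]
  rfl

end BlueSpreadLaw

theorem blue_spread_law_general {F : Type*} [Field F] (A1 A2 A3 : F × F) :
    blueSpread (A2.1 - A1.1, A2.2 - A1.2) (A3.1 - A1.1, A3.2 - A1.2) / Qb A2 A3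
        = blueSpread (A1.1 - A2.1, A1.2 - A2.2) (A3.1 - A2.1, A3.2 - A2.2) / Qb A1 A3
      ∧ blueSpread (A1.1 - A2.1, A1.2 - A2.2) (A3.1 - A2.1, A3.2 - A2.2) / Qb A1 A3
        = blueSpread (A1.1 - A3.1, A1.2 - A3.2) (A2.1 - A3.1, A2.2 - A3.2) / Qb A1 A2 := by
  simp only [blueSpread_div_Qb, twiceSignedArea_swap A1 A2, neg_sq,
    twiceSignedArea_rotate A2 A3 A1, twiceSignedArea_rotate A1 A2 A3, Qb_comm A2 A1, Qb_comm A3 A1,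
    Qb_comm A3 A2]
  constructor <;> ring

/-- Spread law (blue): `s1/Q1 = s2/Q2 = s3/Q3` for a triangle with
nonzero blue quadrances. -/
theorem blue_spread_law {F : Type*} [Field F] (A1 A2 A3 : F × F)
    (hQ1 : Qb A2 A3 ≠ 0) (hQ2 : Qb A1 A3 ≠ 0) (hQ3 : Qb A1 A2 ≠ 0) :
    blueSpread (A2.1 - A1.1, A2.2 - A1.2) (A3.1 - A1.1, A3.2 - A1.2) / Qb A2 A3
        = blueSpread (A1.1 - A2.1, A1.2 - A2.2) (A3.1 - A2.1, A3.2 - A2.2) / Qb A1 A3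
      ∧ blueSpread (A1.1 - A2.1, A1.2 - A2.2) (A3.1 - A2.1, A3.2 - A2.2) / Qb A1 A3
        = blueSpread (A1.1 - A3.1, A1.2 - A3.2) (A2.1 - A3.1, A2.2 - A3.2) / Qb A1 A2 :=
  blue_spread_law_general A1 A2 A3
end

section
/- Cross law (red): for a triangle A1A2A3 with red quadrances Q1, Q2, Q3 and red spread s3 at A3 (defined when Q1, Q2 ≠ 0): (Q1+Q2−Q3)² = 4Q1Q2(1−s3). -/
/-- Red spread between lines with direction vectors `u` and `v`. -/
def redSpread {F : Type*} [Field F] (u v : F × F) : F :=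
  -((u.1 * v.2 - u.2 * v.1) ^ 2 / ((u.1 ^ 2 - u.2 ^ 2) * (v.1 ^ 2 - v.2 ^ 2)))

section RedForm

variable {F : Type*} [Field F]

def redQuadrance (u : F × F) : F :=
  u.1 ^ 2 - u.2 ^ 2

def redDot (u v : F × F) : F :=
  u.1 * v.1 - u.2 * v.2

theorem Qr_eq_redQuadrance_sub (X Y : F × F) : Qr X Y = redQuadrance (X - Y) := by
  simp only [Qr, redQuadrance, Prod.fst_sub, Prod.snd_sub]
  ring

theorem redQuadrance_sub (u v : F × F) :
    redQuadrance (u - v) = redQuadrance u + redQuadrance v - 2 * redDot u v := by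
  simp only [redQuadrance, redDot, Prod.fst_sub, Prod.snd_sub]
  ring

theorem redDot_sq (u v : F × F) :
    redDot u v ^ 2 = redQuadrance u * redQuadrance v + (u.1 * v.2 - u.2 * v.1) ^ 2 := by
  simp only [redDot, redQuadrance]
  ring

theorem one_sub_redSpread {u v : F × F} (hu : redQuadrance u ≠ 0) (hv : redQuadrance v ≠ 0) :
    1 - redSpread u v = redDot u v ^ 2 / (redQuadrance u * redQuadrance v) := by
  rw [redDot_sq, add_div, div_self (mul_ne_zero hu hv)]
  simp only [redSpread, redQuadrance, sub_neg_eq_add]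

theorem redQuadrance_cross_law {u v : F × F} (hu : redQuadrance u ≠ 0)
    (hv : redQuadrance v ≠ 0) :
    (redQuadrance v + redQuadrance u - redQuadrance (u - v)) ^ 2
      = 4 * redQuadrance v * redQuadrance u * (1 - redSpread u v) := by
  rw [one_sub_redSpread hu hv, redQuadrance_sub]
  field_simp
  ring

end RedForm

/-- Cross law (red): `(Q1+Q2-Q3)² = 4Q1Q2(1-s3)`. -/
theorem red_cross_law {F : Type*} [Field F] (A1 A2 A3 : F × F)
    (hQ1 : Qr A2 A3 ≠ 0) (hQ2 : Qr A1 A3 ≠ 0) :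
    (Qr A2 A3 + Qr A1 A3 - Qr A1 A2) ^ 2
      = 4 * Qr A2 A3 * Qr A1 A3
          * (1 - redSpread (A1.1 - A3.1, A1.2 - A3.2) (A2.1 - A3.1, A2.2 - A3.2)) := by
  rw [Qr_eq_redQuadrance_sub] at hQ1 hQ2
  simp only [Qr_eq_redQuadrance_sub, ← sub_sub_sub_cancel_right A1 A2 A3]
  exact redQuadrance_cross_law hQ2 hQ1
end
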